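/- Charge computation: for the profile φ^α_{k,ω} on the star graph, Q(Φ^α_{k,ω}) = −ω‖φ^α_{k,ω}‖²_{L²(Γ)} equals Q₁(ω)Q₂(ω), where Q₁(ω) = −2ω·((p+1)/2)^{2/(p−1)}·(m²−ω²)^{(5−p)/(2(p−1))}/(p−1) and Q₂(ω) = k∫_{−t₀}^1 (1−t²)^{(3−p)/(p−1)}dt + (N−k)∫_{t₀}^1 (1−t²)^{(3−p)/(p−1)}dt with t₀ = α/((2k−N)√(m²−ω²)). -/

import Mathlib

/-!
On each edge the squared profile is `(A sech²(b x ± c))^s` with `s = 2/(p-1)`, and the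
substitution `t = tanh (b x ± c)`, `dt = b sech² dx`, turns its integral over `(0, ∞)` into
`A^s / b · ∫_{tanh(±c)}^1 (1 - t²)^(s-1) dt`. The hypothesis on `m² - ω²` says exactly that
`|t₀| < 1`, so `tanh c = t₀`; the `k` edges shifted by `-c` and the `N - k` edges shifted
by `+c` then add up to `Q₂`, and `A^s / b` times `-ω` is `Q₁`.
-/

open Real MeasureTheory Set intervalIntegral

noncomputable def artanh (t : ℝ) : ℝ := Real.log ((1 + t) / (1 - t)) / 2

namespace Real

lemma one_div_cosh_sq (x : ℝ) : (1 / cosh x) ^ 2 = 1 - tanh x ^ 2 := by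
  have := cosh_pos x
  rw [tanh_eq_sinh_div_cosh]
  field_simp
  linarith [cosh_sq x]

lemma one_sub_tanh_sq_pos (x : ℝ) : 0 < 1 - tanh x ^ 2 := by
  linarith [tanh_sq_lt_one x]

lemma hasDerivAt_tanh (x : ℝ) : HasDerivAt tanh (1 - tanh x ^ 2) x := by
  have h := (hasDerivAt_sinh x).div (hasDerivAt_cosh x) (cosh_pos x).ne'
  rw [show sinh / cosh = tanh from funext fun y => (tanh_eq_sinh_div_cosh y).symm] at h
  refine h.congr_deriv ?_
  rw [← one_div_cosh_sq]
  field_simp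
  linarith [cosh_sq x]

lemma tanh_strictMono : StrictMono tanh :=
  strictMono_of_hasDerivAt_pos hasDerivAt_tanh one_sub_tanh_sq_pos

lemma tanh_image_Ioi (c : ℝ) : tanh '' Ioi c = Ioo (tanh c) 1 := by
  refine Subset.antisymm ?_ fun y hy => ?_
  · rintro _ ⟨x, hx, rfl⟩
    exact ⟨tanh_strictMono hx, tanh_lt_one x⟩
  · have hy' : y ∈ Ioo (-1) 1 := ⟨(neg_one_lt_tanh c).trans hy.1, hy.2⟩
    refine ⟨Real.artanh y, ?_, tanh_artanh hy'⟩
    rw [mem_Ioi, ← tanh_strictMono.lt_iff_lt, tanh_artanh hy']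
    exact hy.1

end Real

lemma artanh_eq_real_artanh {t : ℝ} (ht : t ∈ Icc (-1) 1) :
    _root_.artanh t = Real.artanh t := by
  rw [_root_.artanh, Real.artanh_eq_half_log ht]
  ring

lemma integral_Ioo_tanh_eq {E : Type*} [NormedAddCommGroup E] [NormedSpace ℝ E] (g : ℝ → E)
    {b : ℝ} (hb : 0 < b) (c : ℝ) :
    ∫ t in Ioo (tanh c) 1, g t =
      ∫ x in Ioi 0, (b * (1 - tanh (b * x + c) ^ 2)) • g (tanh (b * x + c)) := by
  have himage : (fun x => tanh (b * x + c)) '' Ioi 0 = Ioo (tanh c) 1 := by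
    rw [show (fun x => tanh (b * x + c)) = tanh ∘ (· + c) ∘ (b * ·) from rfl, image_comp,
      image_comp, image_mul_left_Ioi hb, image_add_const_Ioi, mul_zero, zero_add, tanh_image_Ioi]
  have hderiv (x : ℝ) :
      HasDerivAt (fun x => tanh (b * x + c)) (b * (1 - tanh (b * x + c) ^ 2)) x := by
    have haffine : HasDerivAt (fun x => b * x + c) b x := by
      simpa using ((hasDerivAt_id x).const_mul b).add_const c
    exact ((hasDerivAt_tanh (b * x + c)).comp x haffine).congr_deriv (mul_comm _ _)
  have hinj : StrictMono fun x => tanh (b * x + c) :=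
    tanh_strictMono.comp ((strictMono_mul_left_of_pos hb).add_const c)
  rw [← himage, integral_image_eq_integral_abs_deriv_smul measurableSet_Ioi
    (fun x _ => (hderiv x).hasDerivWithinAt) hinj.injective.injOn]
  refine setIntegral_congr_fun measurableSet_Ioi fun x _ => ?_
  rw [abs_of_pos (mul_pos hb (one_sub_tanh_sq_pos _))]

lemma integral_Ioi_rpow_sech_sq {A b : ℝ} (hA : 0 ≤ A) (hb : 0 < b) (c s : ℝ) :
    ∫ x in Ioi 0, (A * (1 / cosh (b * x + c)) ^ 2) ^ s =
      A ^ s / b * ∫ t in tanh c..1, (1 - t ^ 2) ^ (s - 1) := by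
  have hintegrand (x : ℝ) : (A * (1 / cosh (b * x + c)) ^ 2) ^ s =
      A ^ s / b * ((b * (1 - tanh (b * x + c) ^ 2)) * (1 - tanh (b * x + c) ^ 2) ^ (s - 1)) := by
    have hpos := one_sub_tanh_sq_pos (b * x + c)
    rw [one_div_cosh_sq, mul_rpow hA hpos.le, rpow_sub_one hpos.ne']
    field_simp
  simp only [hintegrand, MeasureTheory.integral_const_mul]
  rw [integral_of_le (tanh_lt_one c).le, integral_Ioc_eq_integral_Ioo,
    integral_Ioo_tanh_eq _ hb]
  simp only [smul_eq_mul]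

lemma soliton_prefactor_eq {p D : ℝ} (hp : 1 < p) (hD : 0 < D) :
    ((p + 1) * D / 2) ^ (2 / (p - 1)) / ((p - 1) * √D / 2) =
      2 * ((p + 1) / 2) ^ (2 / (p - 1)) * D ^ ((5 - p) / (2 * (p - 1))) / (p - 1) := by
  have hp1 : p - 1 ≠ 0 := by linarith
  rw [show (p + 1) * D / 2 = (p + 1) / 2 * D by ring, mul_rpow (by linarith) hD.le, sqrt_eq_rpow,
    show 2 / (p - 1) = (5 - p) / (2 * (p - 1)) + 1 / 2 by field_simp; ring, rpow_add hD]
  have := rpow_pos_of_pos hD (1 / 2)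
  field_simp

lemma integral_Ioi_sq_soliton {p D : ℝ} (hp : 1 < p) (hD : 0 < D) (c : ℝ) :
    ∫ x in Ioi 0,
        (((p + 1) * D / 2 * (1 / cosh ((p - 1) * √D / 2 * x + c)) ^ 2) ^ (1 / (p - 1))) ^ 2 =
      2 * ((p + 1) / 2) ^ (2 / (p - 1)) * D ^ ((5 - p) / (2 * (p - 1))) / (p - 1) *
        ∫ t in tanh c..1, (1 - t ^ 2) ^ ((3 - p) / (p - 1)) := by
  have hp1 : p - 1 ≠ 0 := by linarith
  have hA : 0 ≤ (p + 1) * D / 2 := by nlinarith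
  have hb : 0 < (p - 1) * √D / 2 := by have := sqrt_pos.mpr hD; nlinarith
  have hsq (x : ℝ) : (((p + 1) * D / 2 * (1 / cosh ((p - 1) * √D / 2 * x + c)) ^ 2) ^
      (1 / (p - 1))) ^ 2 = ((p + 1) * D / 2 * (1 / cosh ((p - 1) * √D / 2 * x + c)) ^ 2) ^
      (2 / (p - 1)) := by
    rw [← rpow_mul_natCast (by positivity)]
    ring_nf
  simp only [hsq]
  rw [integral_Ioi_rpow_sech_sq hA hb, soliton_prefactor_eq hp hD,
    show 2 / (p - 1) - 1 = (3 - p) / (p - 1) by field_simp; ring]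

lemma Fin.sum_univ_ite_val_lt {M : Type*} [AddCommMonoid M] {N k : ℕ} (hk : k ≤ N) (a b : M) :
    ∑ j : Fin N, (if (j : ℕ) < k then a else b) = k • a + (N - k) • b := by
  have hcard := Finset.card_filter_add_card_filter_not (s := Finset.univ)
    (p := fun j : Fin N => (j : ℕ) < k)
  rw [Fin.card_filter_val_lt, min_eq_right hk, Finset.card_univ, Fintype.card_fin] at hcard
  rw [Finset.sum_ite, Finset.sum_const, Finset.sum_const, Fin.card_filter_val_lt, min_eq_right hk]
  congr
  omega

lemma abs_div_mul_sqrt_lt_one {a d D : ℝ} (h : a ^ 2 / d ^ 2 < D) :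
    |a / (d * √D)| < 1 := by
  have hD : 0 < D := (div_nonneg (sq_nonneg a) (sq_nonneg d)).trans_lt h
  rw [← sq_lt_one_iff_abs_lt_one, div_pow, mul_pow, sq_sqrt hD.le, ← div_div, div_lt_one hD]
  exact h

theorem charge_computation_general (N k : ℕ) (α p m ω : ℝ)
    (hk : (k : ℝ) ≤ ((N : ℝ) - 1) / 2) (hp : 1 < p)
    (hmω : m ^ 2 - ω ^ 2 > α ^ 2 / ((N : ℝ) - 2 * k) ^ 2)
    (c t₀ : ℝ)
    (ht₀ : t₀ = α / ((2 * (k : ℝ) - N) * Real.sqrt (m ^ 2 - ω ^ 2)))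
    (hc : c = _root_.artanh t₀)
    (φ : Fin N → ℝ → ℝ)
    (hφ : ∀ j : Fin N, φ j = fun x =>
      ((p + 1) * (m ^ 2 - ω ^ 2) / 2 *
        (1 / Real.cosh ((p - 1) * Real.sqrt (m ^ 2 - ω ^ 2) / 2 * x
            + (if (j : ℕ) < k then -c else c))) ^ 2) ^ (1 / (p - 1)))
    (Q₁ Q₂ : ℝ)
    (hQ₁ : Q₁ = -2 * ω * ((p + 1) / 2) ^ (2 / (p - 1)) *
      (m ^ 2 - ω ^ 2) ^ ((5 - p) / (2 * (p - 1))) / (p - 1))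
    (hQ₂ : Q₂ = (k : ℝ) * (∫ t in (-t₀)..1, (1 - t ^ 2) ^ ((3 - p) / (p - 1))) +
      ((N : ℝ) - k) * ∫ t in t₀..1, (1 - t ^ 2) ^ ((3 - p) / (p - 1))) :
    -ω * (∑ j : Fin N, ∫ x in Ioi (0 : ℝ), φ j x ^ 2) = Q₁ * Q₂ := by
  have hD : 0 < m ^ 2 - ω ^ 2 := (div_nonneg (sq_nonneg _) (sq_nonneg _)).trans_lt hmω
  have ht₀_mem : t₀ ∈ Ioo (-1) 1 := by
    rw [show ((N : ℝ) - 2 * k) ^ 2 = (2 * k - N) ^ 2 by ring] at hmω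
    exact ht₀ ▸ abs_lt.mp (abs_div_mul_sqrt_lt_one hmω)
  have htanh_c : tanh c = t₀ := by
    rw [hc, artanh_eq_real_artanh (Ioo_subset_Icc_self ht₀_mem), tanh_artanh ht₀_mem]
  have hedge (j : Fin N) : ∫ x in Ioi 0, φ j x ^ 2 =
      2 * ((p + 1) / 2) ^ (2 / (p - 1)) * (m ^ 2 - ω ^ 2) ^ ((5 - p) / (2 * (p - 1))) / (p - 1) *
        if (j : ℕ) < k then ∫ t in (-t₀)..1, (1 - t ^ 2) ^ ((3 - p) / (p - 1))
        else ∫ t in t₀..1, (1 - t ^ 2) ^ ((3 - p) / (p - 1)) := by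
    simp only [hφ j, integral_Ioi_sq_soliton hp hD]
    split_ifs <;> simp only [tanh_neg, htanh_c]
  have hkN : k ≤ N := by exact_mod_cast (by linarith : (k : ℝ) ≤ N)
  rw [Finset.sum_congr rfl fun j _ => hedge j, ← Finset.mul_sum, Fin.sum_univ_ite_val_lt hkN,
    nsmul_eq_mul, nsmul_eq_mul, Nat.cast_sub hkN, hQ₁, hQ₂]
  ring

/-- Charge computation: `Q(Φ) = -ω ‖φ‖²_{L²(Γ)} = Q₁(ω) Q₂(ω)`. -/
theorem charge_computation (N k : ℕ) (α p m ω : ℝ)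
    (hN : 2 ≤ N) (hk : (k : ℝ) ≤ ((N : ℝ) - 1) / 2) (hα : α ≠ 0) (hp : 1 < p)
    (hmω : m ^ 2 - ω ^ 2 > α ^ 2 / ((N : ℝ) - 2 * k) ^ 2)
    (c t₀ : ℝ)
    (ht₀ : t₀ = α / ((2 * (k : ℝ) - N) * Real.sqrt (m ^ 2 - ω ^ 2)))
    (hc : c = _root_.artanh t₀)
    (φ : Fin N → ℝ → ℝ)
    (hφ : ∀ j : Fin N, φ j = fun x =>
      ((p + 1) * (m ^ 2 - ω ^ 2) / 2 *
        (1 / Real.cosh ((p - 1) * Real.sqrt (m ^ 2 - ω ^ 2) / 2 * x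
            + (if (j : ℕ) < k then -c else c))) ^ 2) ^ (1 / (p - 1)))
    (Q₁ Q₂ : ℝ)
    (hQ₁ : Q₁ = -2 * ω * ((p + 1) / 2) ^ (2 / (p - 1)) *
      (m ^ 2 - ω ^ 2) ^ ((5 - p) / (2 * (p - 1))) / (p - 1))
    (hQ₂ : Q₂ = (k : ℝ) * (∫ t in (-t₀)..1, (1 - t ^ 2) ^ ((3 - p) / (p - 1))) +
      ((N : ℝ) - k) * ∫ t in t₀..1, (1 - t ^ 2) ^ ((3 - p) / (p - 1))) :
    -ω * (∑ j : Fin N, ∫ x in Ioi (0 : ℝ), φ j x ^ 2) = Q₁ * Q₂ :=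
  charge_computation_general N k α p m ω hk hp hmω c t₀ ht₀ hc φ hφ Q₁ Q₂ hQ₁ hQ₂
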